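/- arXiv:1605.01971 — 6 statements merged into one kernel-verified Lean document; each statement's English description precedes it below -/
import Mathlib

section
/- Let x ∈ X, s ∈ {1,…,n}, and pick y_s(x) ∈ Y_s(x). Define the direction d by d_s = y_s(x) − x_s and d_i = 0 for i ≠ s. Then the one-sided directional derivative of μ at x in direction d satisfies μ'(x; d) ≤ −φ_s(x). -/
/-!
Only the `s`-th block moves along `d`, so the nonsmooth part of the difference quotient of `μ` is
the difference quotient of `h_s` along the segment `[x_s, y_s]`, which convexity bounds by
`h_s(y_s) - h_s(x_s)` for `t ∈ (0, 1]`, while the smooth part tends to `⟨g_s(x), y_s - x_s⟩`.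
The limit bound is therefore `-σ_s(x, y_s)`, and since `y_s` minimizes `Φ_s(x, ·)` over `X_s`,
`σ_s(x, y_s)` is the largest value of `σ_s(x, ·)`, namely `φ_s(x)`.
-/

open scoped RealInnerProductSpace
open Filter Topology

noncomputable section

abbrev Blk {n : ℕ} (N : Fin n → ℕ) (i : Fin n) : Type :=
  EuclideanSpace ℝ (Fin (N i))

abbrev Tot {n : ℕ} (N : Fin n → ℕ) : Type :=
  PiLp 2 (fun i => EuclideanSpace ℝ (Fin (N i)))

theorem ConvexOn.div_sub_le_sub {E : Type*} [AddCommGroup E] [Module ℝ E] {S : Set E}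
    {F : E → ℝ} (hF : ConvexOn ℝ S F) {a b : E} (ha : a ∈ S) (hb : b ∈ S) {t : ℝ}
    (ht₀ : 0 < t) (ht₁ : t ≤ 1) :
    (F (a + t • (b - a)) - F a) / t ≤ F b - F a := by
  have hcomb : a + t • (b - a) = (1 - t) • a + t • b := by module
  have hconv := hF.2 ha hb (sub_nonneg.2 ht₁) ht₀.le (sub_add_cancel 1 t)
  rw [smul_eq_mul, smul_eq_mul, ← hcomb] at hconv
  rw [div_le_iff₀ ht₀]
  linarith

theorem HasGradientAt.tendsto_slope_nhdsGT {F : Type*} [NormedAddCommGroup F]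
    [InnerProductSpace ℝ F] [CompleteSpace F] {f : F → ℝ} {g x : F}
    (hf : HasGradientAt f g x) (d : F) :
    Tendsto (fun t : ℝ => (f (x + t • d) - f x) / t) (𝓝[>] 0) (𝓝 ⟪g, d⟫) := by
  simpa [div_eq_inv_mul] using (hf.hasFDerivAt.hasLineDerivAt d).tendsto_slope_zero_right

theorem limsup_coe_le_of_eventually_le_of_tendsto {α : Type*} {l : Filter α} [l.NeBot]
    {u v : α → ℝ} {L : ℝ} (huv : ∀ᶠ a in l, u a ≤ v a) (hv : Tendsto v l (𝓝 L)) :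
    limsup (fun a => (u a : EReal)) l ≤ L := by
  rw [← ((continuous_coe_real_ereal.tendsto L).comp hv).limsup_eq]
  exact limsup_le_limsup (huv.mono fun a ha => EReal.coe_le_coe_iff.2 ha)

theorem Finset.sum_add_eq_of_ne_imp_eq_zero {ι M : Type*} [Fintype ι] {E : ι → Type*}
    [∀ i, AddCommGroup (E i)] [AddCommGroup M] (F : ∀ i, E i → M) (x d : ∀ i, E i) {s : ι}
    (hd : ∀ i, i ≠ s → d i = 0) :
    ∑ i, F i (x i + d i) = ∑ i, F i (x i) + (F s (x s + d s) - F s (x s)) := by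
  rw [← sub_eq_iff_eq_add', ← Finset.sum_sub_distrib,
    Finset.sum_eq_single_of_mem s (Finset.mem_univ s)]
  intro i _ hi
  rw [hd i hi, add_zero, sub_self]

theorem PiLp.inner_eq_of_ne_imp_eq_zero {ι : Type*} [Fintype ι] {E : ι → Type*}
    [∀ i, NormedAddCommGroup (E i)] [∀ i, InnerProductSpace ℝ (E i)] (g d : PiLp 2 E) {s : ι}
    (hd : ∀ i, i ≠ s → d i = 0) :
    ⟪g, d⟫ = ⟪g s, d s⟫ := by
  rw [PiLp.inner_apply, Finset.sum_eq_single_of_mem s (Finset.mem_univ s)]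
  intro i _ hi
  rw [hd i hi, inner_zero_right]

theorem isGreatest_image_of_isMinOn {E : Type*} [NormedAddCommGroup E] [InnerProductSpace ℝ E]
    {S : Set E} {F : E → ℝ} {c x y : E} (hy : y ∈ S)
    (hmin : IsMinOn (fun z => ⟪c, z⟫ + F z) S y) :
    IsGreatest ((fun z => ⟪c, x - z⟫ + F x - F z) '' S) (⟪c, x - y⟫ + F x - F y) := by
  refine ⟨⟨y, hy, rfl⟩, ?_⟩
  rintro _ ⟨z, hz, rfl⟩
  have := isMinOn_iff.1 hmin z hz
  simp only [inner_sub_right] at this ⊢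
  linarith

theorem stmt6_general
    {n : ℕ} {N : Fin n → ℕ}
    (Xi : ∀ i, Set (Blk N i))
    (f : Tot N → ℝ) (g : Tot N → Tot N)
    (hf : ∀ x, HasGradientAt f (g x) x)
    (h : ∀ i, Blk N i → ℝ)
    (hhcv : ∀ i, ConvexOn ℝ (Xi i) (h i))
    (X : Set (Tot N)) (hX : X = {x | ∀ i, x i ∈ Xi i})
    (μ : Tot N → ℝ) (hμ : ∀ x, μ x = f x + ∑ i, h i (x i))
    (φ : ∀ i, Tot N → ℝ)
    (hφ : ∀ i x, φ i x =
      sSup ((fun y => ⟪g x i, x i - y⟫ + h i (x i) - h i y) '' Xi i))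
    (Y : ∀ i, Tot N → Set (Blk N i))
    (hY : ∀ i x, Y i x = {y ∈ Xi i | ∀ z ∈ Xi i,
      ⟪g x i, y⟫ + h i y ≤ ⟪g x i, z⟫ + h i z})
    (x : Tot N) (hx : x ∈ X) (s : Fin n)
    (ys : Blk N s) (hys : ys ∈ Y s x)
    (d : Tot N) (hds : d s = ys - x s) (hd0 : ∀ i, i ≠ s → d i = 0) :
    Filter.limsup (fun t : ℝ => (((μ (x + t • d) - μ x) / t : ℝ) : EReal))
        (𝓝[>] (0 : ℝ))
      ≤ ((-(φ s x) : ℝ) : EReal) := by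
  have hxs : x s ∈ Xi s := (hX ▸ hx) s
  rw [hY] at hys
  obtain ⟨hysX, hysmin⟩ := hys
  have hφs : φ s x = ⟪g x s, x s - ys⟫ + h s (x s) - h s ys :=
    (hφ s x).trans (isGreatest_image_of_isMinOn hysX (isMinOn_iff.2 hysmin)).csSup_eq
  have hquot : ∀ᶠ t in 𝓝[>] (0 : ℝ), (μ (x + t • d) - μ x) / t ≤
      (f (x + t • d) - f x) / t + (h s ys - h s (x s)) := by
    filter_upwards [Ioc_mem_nhdsGT one_pos] with t ⟨ht₀, ht₁⟩
    have hsplit : ∑ i, h i ((x + t • d) i) =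
        ∑ i, h i (x i) + (h s (x s + t • d s) - h s (x s)) :=
      Finset.sum_add_eq_of_ne_imp_eq_zero h x (t • d) fun i hi => by simp [hd0 i hi]
    have hblock := (hhcv s).div_sub_le_sub hxs hysX ht₀ ht₁
    rw [← hds] at hblock
    calc (μ (x + t • d) - μ x) / t
        = (f (x + t • d) - f x) / t + (h s (x s + t • d s) - h s (x s)) / t := by
          rw [hμ, hμ, hsplit]; ring
      _ ≤ (f (x + t • d) - f x) / t + (h s ys - h s (x s)) := by gcongr
  refine (limsup_coe_le_of_eventually_le_of_tendsto hquot
    (((hf x).tendsto_slope_nhdsGT d).add_const _)).trans ?_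
  rw [hφs, PiLp.inner_eq_of_ne_imp_eq_zero _ _ hd0, hds, inner_sub_right, inner_sub_right]
  exact EReal.coe_le_coe_iff.2 (le_of_eq (by ring))

theorem stmt6
    {n : ℕ} {N : Fin n → ℕ}
    (Xi : ∀ i, Set (Blk N i))
    (hXne : ∀ i, (Xi i).Nonempty)
    (hXcv : ∀ i, Convex ℝ (Xi i))
    (hXcp : ∀ i, IsCompact (Xi i))
    (f : Tot N → ℝ) (g : Tot N → Tot N)
    (hf : ∀ x, HasGradientAt f (g x) x)
    (hg : Continuous g)
    (h : ∀ i, Blk N i → ℝ)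
    (hhcv : ∀ i, ConvexOn ℝ (Xi i) (h i))
    (hhlsc : ∀ i, LowerSemicontinuousOn (h i) (Xi i))
    (X : Set (Tot N)) (hX : X = {x | ∀ i, x i ∈ Xi i})
    (μ : Tot N → ℝ) (hμ : ∀ x, μ x = f x + ∑ i, h i (x i))
    (φ : ∀ i, Tot N → ℝ)
    (hφ : ∀ i x, φ i x =
      sSup ((fun y => ⟪g x i, x i - y⟫ + h i (x i) - h i y) '' Xi i))
    (Y : ∀ i, Tot N → Set (Blk N i))
    (hY : ∀ i x, Y i x = {y ∈ Xi i | ∀ z ∈ Xi i,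
      ⟪g x i, y⟫ + h i y ≤ ⟪g x i, z⟫ + h i z})
    (x : Tot N) (hx : x ∈ X) (s : Fin n)
    (ys : Blk N s) (hys : ys ∈ Y s x)
    (d : Tot N) (hds : d s = ys - x s) (hd0 : ∀ i, i ≠ s → d i = 0) :
    Filter.limsup (fun t : ℝ => (((μ (x + t • d) - μ x) / t : ℝ) : EReal))
        (𝓝[>] (0 : ℝ))
      ≤ ((-(φ s x) : ℝ) : EReal) :=
  stmt6_general Xi f g hf h hhcv X hX μ hμ φ hφ Y hY x hx s ys hys d hds hd0
end
end

section
/- The Armijo line-search is finite: let x ∈ X, s ∈ {1,…,n} with φ_s(x) > 0, let β ∈ (0,1), θ ∈ (0,1), choose y_s ∈ Y_s(x), and define d by d_s = y_s − x_s and d_i = 0 for i ≠ s. Then there exists m ∈ ℕ (m ≥ 0) such that μ(x + θ^m d) ≤ μ(x) − β θ^m φ_s(x). -/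
/-
Along `d` the smooth part decreases at the rate `⟪g x, d⟫` to first order, while by convexity
the nonsmooth part decreases at least at the rate `h_s(x_s) - h_s(y_s)`; since `y_s` minimises
`Φ_s(x, ·)`, the two rates add up to `φ_s(x) > 0`. Hence for all small enough `t > 0` the
objective decreases by more than `β t φ_s(x)` (as `β < 1`), and `θ^m → 0⁺` lands in that range.
-/

open scoped RealInnerProductSpace
open Filter Topology

noncomputable section

open Set

theorem ConvexOn.map_add_smul_sub_le {E : Type*} [AddCommGroup E] [Module ℝ E] {s : Set E}
    {H : E → ℝ} (hH : ConvexOn ℝ s H) {x y : E} (hx : x ∈ s) (hy : y ∈ s) {t : ℝ}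
    (ht₀ : 0 ≤ t) (ht₁ : t ≤ 1) :
    H (x + t • (y - x)) ≤ H x + t * (H y - H x) := by
  have hseg : x + t • (y - x) = (1 - t) • x + t • y := by module
  calc H (x + t • (y - x)) ≤ (1 - t) • H x + t • H y :=
        hseg ▸ hH.2 hx hy (by linarith) ht₀ (by ring)
    _ = H x + t * (H y - H x) := by simp only [smul_eq_mul]; ring

theorem HasFDerivAt.eventually_add_convexOn_le {E : Type*} [NormedAddCommGroup E]
    [NormedSpace ℝ E] {f H : E → ℝ} {f' : E →L[ℝ] ℝ} {s : Set E} {x v : E} {β : ℝ}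
    (hf : HasFDerivAt f f' x) (hH : ConvexOn ℝ s H) (hx : x ∈ s) (hxv : x + v ∈ s)
    (hβ : β < 1) (hgap : 0 < H x - H (x + v) - f' v) :
    ∀ᶠ t in 𝓝[>] (0 : ℝ), f (x + t • v) + H (x + t • v) ≤
      f x + H x - β * t * (H x - H (x + v) - f' v) := by
  set gap := H x - H (x + v) - f' v
  have hline : HasDerivAt (fun t : ℝ => f (x + t • v)) (f' v) 0 := by
    have hL : HasDerivAt (fun t : ℝ => x + t • v) v 0 := by
      simpa using ((hasDerivAt_id (0 : ℝ)).smul_const v).const_add x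
    exact (by simpa using hf : HasFDerivAt f f' (x + (0 : ℝ) • v)).comp_hasDerivAt 0 hL
  have hslope : ∀ᶠ t in 𝓝[>] (0 : ℝ), slope (fun t : ℝ => f (x + t • v)) 0 t <
      f' v + (1 - β) * gap :=
    hline.hasDerivWithinAt.limsup_slope_le' self_notMem_Ioi (by nlinarith)
  filter_upwards [hslope, Ioo_mem_nhdsGT one_pos] with t hlt ⟨ht₀, ht₁⟩
  have hfdec : f (x + t • v) - f x < t * (f' v + (1 - β) * gap) := by
    rw [slope_def_field, zero_smul, add_zero, sub_zero, div_lt_iff₀ ht₀] at hlt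
    linarith
  have hHdec := hH.map_add_smul_sub_le hx hxv ht₀.le ht₁.le
  rw [add_sub_cancel_left] at hHdec
  nlinarith

namespace PiLp

variable {ι : Type*} [Fintype ι]

theorem convexOn_sum_apply {p : ENNReal} {E : ι → Type*} [∀ i, AddCommGroup (E i)]
    [∀ i, Module ℝ (E i)] {t : ∀ i, Set (E i)} {h : ∀ i, E i → ℝ}
    (hh : ∀ i, ConvexOn ℝ (t i) (h i)) :
    ConvexOn ℝ {z : PiLp p E | ∀ i, z i ∈ t i} (fun z => ∑ i, h i (z i)) := by
  refine ⟨fun a ha b hb u v hu hv huv i => ?_, fun a ha b hb u v hu hv huv => ?_⟩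
  · exact (hh i).1 (ha i) (hb i) hu hv huv
  · simp only [WithLp.ofLp_add, WithLp.ofLp_smul, Pi.add_apply, Pi.smul_apply, smul_eq_mul,
      Finset.mul_sum, ← Finset.sum_add_distrib]
    exact Finset.sum_le_sum fun i _ => (hh i).2 (ha i) (hb i) hu hv huv

theorem inner_eq_inner_apply_of_forall_ne {𝕜 : Type*} [RCLike 𝕜] {E : ι → Type*}
    [∀ i, NormedAddCommGroup (E i)] [∀ i, InnerProductSpace 𝕜 (E i)] {u v : PiLp 2 E} {s : ι}
    (hv : ∀ i, i ≠ s → v i = 0) : inner 𝕜 u v = inner 𝕜 (u s) (v s) := by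
  rw [PiLp.inner_apply, Finset.sum_eq_single_of_mem s (Finset.mem_univ s)]
  intro i _ hi
  rw [hv i hi, inner_zero_right]

theorem sum_apply_add_of_forall_ne {p : ENNReal} {E : ι → Type*} [∀ i, AddCommGroup (E i)]
    {h : ∀ i, E i → ℝ} {x d : PiLp p E} {s : ι} (hd : ∀ i, i ≠ s → d i = 0) :
    ∑ i, h i ((x + d) i) = ∑ i, h i (x i) - h s (x s) + h s (x s + d s) := by
  have hdiff : ∑ i, h i ((x + d) i) - ∑ i, h i (x i) = h s (x s + d s) - h s (x s) := by
    rw [← Finset.sum_sub_distrib, Finset.sum_eq_single_of_mem s (Finset.mem_univ s)]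
    · rfl
    · intro i _ hi
      rw [WithLp.ofLp_add, Pi.add_apply, hd i hi, add_zero, sub_self]
  linarith

end PiLp

theorem stmt7_general
    {n : ℕ} {N : Fin n → ℕ}
    (Xi : ∀ i, Set (Blk N i))
    (f : Tot N → ℝ) (g : Tot N → Tot N)
    (hf : ∀ x, HasGradientAt f (g x) x)
    (h : ∀ i, Blk N i → ℝ)
    (hhcv : ∀ i, ConvexOn ℝ (Xi i) (h i))
    (X : Set (Tot N)) (hX : X = {x | ∀ i, x i ∈ Xi i})
    (μ : Tot N → ℝ) (hμ : ∀ x, μ x = f x + ∑ i, h i (x i))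
    (φ : ∀ i, Tot N → ℝ)
    (hφ : ∀ i x, φ i x =
      sSup ((fun y => ⟪g x i, x i - y⟫ + h i (x i) - h i y) '' Xi i))
    (Y : ∀ i, Tot N → Set (Blk N i))
    (hY : ∀ i x, Y i x = {y ∈ Xi i | ∀ z ∈ Xi i,
      ⟪g x i, y⟫ + h i y ≤ ⟪g x i, z⟫ + h i z})
    (β θ : ℝ) (hβ : β ∈ Set.Ioo (0 : ℝ) 1) (hθ : θ ∈ Set.Ioo (0 : ℝ) 1)
    (x : Tot N) (hx : x ∈ X) (s : Fin n) (hφs : 0 < φ s x)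
    (ys : Blk N s) (hys : ys ∈ Y s x)
    (d : Tot N) (hds : d s = ys - x s) (hd0 : ∀ i, i ≠ s → d i = 0) :
    ∃ m : ℕ, μ (x + θ ^ m • d) ≤ μ x - β * θ ^ m * φ s x := by
  subst hX
  rw [hY] at hys
  obtain ⟨hysX, hysmin⟩ := hys
  have hxd : x + d ∈ {x : Tot N | ∀ i, x i ∈ Xi i} := by
    intro i
    rcases eq_or_ne i s with rfl | hi
    · simpa [hds] using hysX
    · simpa [hd0 i hi] using hx i
  have hφ_eq : φ s x = ⟪g x s, x s - ys⟫ + h s (x s) - h s ys := by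
    rw [hφ]
    refine IsGreatest.csSup_eq ⟨⟨ys, hysX, rfl⟩, ?_⟩
    rintro _ ⟨z, hz, rfl⟩
    have := hysmin z hz
    simp only [inner_sub_right]
    linarith
  have hgap : ∑ i, h i (x i) - ∑ i, h i ((x + d) i) - ⟪g x, d⟫ = φ s x := by
    rw [PiLp.sum_apply_add_of_forall_ne hd0, PiLp.inner_eq_inner_apply_of_forall_ne hd0, hφ_eq,
      hds, add_sub_cancel, inner_sub_right, inner_sub_right]
    ring
  have hdescent := (hf x).hasFDerivAt.eventually_add_convexOn_le
    (PiLp.convexOn_sum_apply hhcv) hx hxd hβ.2 (hgap ▸ hφs)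
  obtain ⟨m, hm⟩ := ((tendsto_pow_atTop_nhdsWithin_zero_of_lt_one hθ.1 hθ.2).eventually
    hdescent).exists
  refine ⟨m, ?_⟩
  rw [hμ, hμ, ← hgap]
  exact hm

theorem stmt7
    {n : ℕ} {N : Fin n → ℕ}
    (Xi : ∀ i, Set (Blk N i))
    (hXne : ∀ i, (Xi i).Nonempty)
    (hXcv : ∀ i, Convex ℝ (Xi i))
    (hXcp : ∀ i, IsCompact (Xi i))
    (f : Tot N → ℝ) (g : Tot N → Tot N)
    (hf : ∀ x, HasGradientAt f (g x) x)
    (hg : Continuous g)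
    (h : ∀ i, Blk N i → ℝ)
    (hhcv : ∀ i, ConvexOn ℝ (Xi i) (h i))
    (hhlsc : ∀ i, LowerSemicontinuousOn (h i) (Xi i))
    (X : Set (Tot N)) (hX : X = {x | ∀ i, x i ∈ Xi i})
    (μ : Tot N → ℝ) (hμ : ∀ x, μ x = f x + ∑ i, h i (x i))
    (φ : ∀ i, Tot N → ℝ)
    (hφ : ∀ i x, φ i x =
      sSup ((fun y => ⟪g x i, x i - y⟫ + h i (x i) - h i y) '' Xi i))
    (Y : ∀ i, Tot N → Set (Blk N i))
    (hY : ∀ i x, Y i x = {y ∈ Xi i | ∀ z ∈ Xi i,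
      ⟪g x i, y⟫ + h i y ≤ ⟪g x i, z⟫ + h i z})
    (β θ : ℝ) (hβ : β ∈ Set.Ioo (0 : ℝ) 1) (hθ : θ ∈ Set.Ioo (0 : ℝ) 1)
    (x : Tot N) (hx : x ∈ X) (s : Fin n) (hφs : 0 < φ s x)
    (ys : Blk N s) (hys : ys ∈ Y s x)
    (d : Tot N) (hds : d s = ys - x s) (hd0 : ∀ i, i ≠ s → d i = 0) :
    ∃ m : ℕ, μ (x + θ ^ m • d) ≤ μ x - β * θ ^ m * φ s x :=
  stmt7_general Xi f g hf h hhcv X hX μ hμ φ hφ Y hY β θ hβ hθ x hx s hφs ys hys d hds hd0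
end
end

section
/- Uniform descent estimate: suppose the gradient map g is uniformly continuous on X, and let β ∈ (0,1), δ > 0. Then there exists λ' > 0 such that for every x ∈ X, every s ∈ {1,…,n} with φ_s(x) ≥ δ, every y_s ∈ Y_s(x), and every λ ∈ (0, λ'], setting d_s = y_s − x_s and d_i = 0 for i ≠ s, one has μ(x + λ d) − μ(x) ≤ −β λ φ_s(x). -/
open scoped RealInnerProductSpace
open Filter Topology

noncomputable section

/-!
Uniform continuity of `g` on the bounded convex set `X` makes the first-order expansion of `f`
uniform: for all small `λ` and all `x, y ∈ X`,
`f (x + λ (y - x)) ≤ f x + λ (⟪g x, y - x⟫ + (1 - β) δ)`. Along a step `d` that only moves block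
`s` towards `y_s`, convexity of `h_s` bounds the change of `h` by `λ (h_s y_s - h_s x_s)`, and
because `y_s` minimizes `Φ_s (x, ·)` the two first-order terms add up to `-λ φ_s x`. The slack
`(1 - β) δ ≤ (1 - β) φ_s x` is then absorbed.
-/

open Set Bornology

theorem Fintype.sum_sub_sum_eq_of_forall_ne {ι M : Type*} [Fintype ι] [AddCommGroup M]
    {u v : ι → M} {s : ι} (h : ∀ i ≠ s, u i = v i) : ∑ i, u i - ∑ i, v i = u s - v s := by
  rw [← Finset.sum_sub_distrib, Fintype.sum_eq_single s fun i hi => by rw [h i hi, sub_self]]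

theorem ConvexOn.map_add_smul_sub_le_s8 {E : Type*} [AddCommGroup E] [Module ℝ E] {S : Set E}
    {F : E → ℝ} (hF : ConvexOn ℝ S F) {a b : E} (ha : a ∈ S) (hb : b ∈ S) {t : ℝ}
    (ht₀ : 0 ≤ t) (ht₁ : t ≤ 1) : F (a + t • (b - a)) ≤ F a + t * (F b - F a) := by
  have h := hF.2 ha hb (sub_nonneg.2 ht₁) ht₀ (sub_add_cancel 1 t)
  rw [smul_eq_mul, smul_eq_mul] at h
  calc F (a + t • (b - a)) = F ((1 - t) • a + t • b) := by congr 1; module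
    _ ≤ F a + t * (F b - F a) := by linarith

namespace PiLp

variable {p : ENNReal} {ι : Type*} {β : ι → Type*} {S : ∀ i, Set (β i)}

theorem convex_setOf_forall_mem [∀ i, AddCommGroup (β i)] [∀ i, Module ℝ (β i)]
    (hS : ∀ i, Convex ℝ (S i)) : Convex ℝ {x : PiLp p β | ∀ i, x i ∈ S i} :=
  fun _ hx _ hy _ _ ha hb hab i => hS i (hx i) (hy i) ha hb hab

theorem isBounded_setOf_forall_mem [Fact (1 ≤ p)] [Fintype ι] [∀ i, PseudoMetricSpace (β i)]
    (hS : ∀ i, IsBounded (S i)) : IsBounded {x : PiLp p β | ∀ i, x i ∈ S i} :=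
  ((antilipschitzWith_ofLp p β).isBounded_preimage (IsBounded.pi hS)).subset
    fun _ hx i _ => hx i

theorem inner_eq_inner_apply_of_forall_ne_s8 [Fintype ι] [∀ i, NormedAddCommGroup (β i)]
    [∀ i, InnerProductSpace ℝ (β i)] {x y : PiLp 2 β} {s : ι} (hy : ∀ i ≠ s, y i = 0) :
    ⟪x, y⟫ = ⟪x s, y s⟫ := by
  rw [PiLp.inner_apply, Fintype.sum_eq_single s fun i hi => by rw [hy i hi, inner_zero_right]]

end PiLp

section Gradient

variable {E : Type*} [NormedAddCommGroup E] [InnerProductSpace ℝ E] [CompleteSpace E]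
  {f : E → ℝ} {g : E → E}

theorem image_sub_le_inner_add_of_norm_gradient_sub_le {x y : E} {ε : ℝ}
    (hf : ∀ z ∈ segment ℝ x y, HasGradientAt f (g z) z)
    (hg : ∀ z ∈ segment ℝ x y, ‖g z - g x‖ ≤ ε) :
    f y - f x ≤ ⟪g x, y - x⟫ + ε * ‖y - x‖ := by
  have h := (convex_segment x y).norm_image_sub_le_of_norm_hasFDerivWithin_le'
    (fun z hz => (hf z hz).hasFDerivAt.hasFDerivWithinAt)
    (φ := InnerProductSpace.toDual ℝ E (g x))
    (fun z hz => by rw [← map_sub, LinearIsometryEquiv.norm_map]; exact hg z hz)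
    (left_mem_segment ℝ x y) (right_mem_segment ℝ x y)
  rw [InnerProductSpace.toDual_apply_apply, Real.norm_eq_abs] at h
  linarith [le_abs_self (f y - f x - ⟪g x, y - x⟫)]

theorem exists_uniform_linearization_bound {X : Set E} (hXc : Convex ℝ X) (hXb : IsBounded X)
    (hf : ∀ x ∈ X, HasGradientAt f (g x) x) (hg : UniformContinuousOn g X) {ε : ℝ}
    (hε : 0 < ε) :
    ∃ lam' ∈ Ioc (0 : ℝ) 1, ∀ x ∈ X, ∀ y ∈ X, ∀ lam ∈ Ioc 0 lam',
      f (x + lam • (y - x)) - f x ≤ lam * (⟪g x, y - x⟫ + ε) := by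
  set M := Metric.diam X + 1
  have hM : 0 < M := by positivity
  obtain ⟨r, hr, hgr⟩ := Metric.uniformContinuousOn_iff_le.mp hg (ε / M) (by positivity)
  refine ⟨min 1 (r / M), ⟨by positivity, min_le_left _ _⟩, fun x hx y hy lam ⟨hlam₀, hlam⟩ => ?_⟩
  set z := x + lam • (y - x)
  have hsegX : segment ℝ x z ⊆ X := hXc.segment_subset hx
    (hXc.add_smul_sub_mem hx hy ⟨hlam₀.le, hlam.trans (min_le_left _ _)⟩)
  have hzx : ‖z - x‖ = lam * ‖y - x‖ := by
    rw [add_sub_cancel_left, norm_smul, Real.norm_of_nonneg hlam₀.le]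
  have hyx : ‖y - x‖ ≤ M := by
    rw [← dist_eq_norm]; linarith [Metric.dist_le_diam_of_mem hXb hy hx]
  have hzr : dist z x ≤ r := calc
    dist z x = lam * ‖y - x‖ := by rw [dist_eq_norm, hzx]
    _ ≤ r / M * M :=
      mul_le_mul (hlam.trans (min_le_right _ _)) hyx (norm_nonneg _) (by positivity)
    _ = r := div_mul_cancel₀ r hM.ne'
  have hnear : ∀ w ∈ segment ℝ x z, ‖g w - g x‖ ≤ ε / M := fun w hw => by
    rw [← dist_eq_norm]
    refine hgr w (hsegX hw) x hx ?_
    rw [dist_comm]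
    linarith [dist_add_dist_of_mem_segment hw, dist_nonneg (x := w) (y := z), dist_comm x z]
  calc f z - f x ≤ ⟪g x, z - x⟫ + ε / M * ‖z - x‖ :=
        image_sub_le_inner_add_of_norm_gradient_sub_le (fun w hw => hf w (hsegX hw)) hnear
    _ ≤ lam * ⟪g x, y - x⟫ + ε / M * (lam * M) := by
        rw [hzx, add_sub_cancel_left, inner_smul_right]; gcongr
    _ = lam * (⟪g x, y - x⟫ + ε) := by field_simp

end Gradient

theorem stmt8_general
    {n : ℕ} {N : Fin n → ℕ}
    (Xi : ∀ i, Set (Blk N i))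
    (hXcv : ∀ i, Convex ℝ (Xi i))
    (hXcp : ∀ i, IsCompact (Xi i))
    (f : Tot N → ℝ) (g : Tot N → Tot N)
    (hf : ∀ x, HasGradientAt f (g x) x)
    (h : ∀ i, Blk N i → ℝ)
    (hhcv : ∀ i, ConvexOn ℝ (Xi i) (h i))
    (X : Set (Tot N)) (hX : X = {x | ∀ i, x i ∈ Xi i})
    (μ : Tot N → ℝ) (hμ : ∀ x, μ x = f x + ∑ i, h i (x i))
    (φ : ∀ i, Tot N → ℝ)
    (hφ : ∀ i x, φ i x =
      sSup ((fun y => ⟪g x i, x i - y⟫ + h i (x i) - h i y) '' Xi i))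
    (Y : ∀ i, Tot N → Set (Blk N i))
    (hY : ∀ i x, Y i x = {y ∈ Xi i | ∀ z ∈ Xi i,
      ⟪g x i, y⟫ + h i y ≤ ⟪g x i, z⟫ + h i z})
    (hgu : UniformContinuousOn g X)
    (β δ : ℝ) (hβ : β ∈ Set.Ioo (0 : ℝ) 1) (hδ : 0 < δ) :
    ∃ lam' : ℝ, 0 < lam' ∧
      ∀ x ∈ X, ∀ s : Fin n, δ ≤ φ s x →
        ∀ ys ∈ Y s x, ∀ d : Tot N, d s = ys - x s → (∀ i, i ≠ s → d i = 0) →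
          ∀ lam : ℝ, 0 < lam → lam ≤ lam' →
            μ (x + lam • d) - μ x ≤ -(β * lam * φ s x) := by
  subst hX
  obtain ⟨lam', ⟨hlam'₀, hlam'₁⟩, hlin⟩ := exists_uniform_linearization_bound
    (PiLp.convex_setOf_forall_mem hXcv)
    (PiLp.isBounded_setOf_forall_mem fun i => (hXcp i).isBounded)
    (fun x _ => hf x) hgu (mul_pos (sub_pos.2 hβ.2) hδ)
  refine ⟨lam', hlam'₀, fun x hx s hδφ ys hys d hds hd lam hlam₀ hlam => ?_⟩
  rw [hY] at hys
  have hxd : x + d ∈ {x : Tot N | ∀ i, x i ∈ Xi i} := fun i => by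
    by_cases hi : i = s
    · subst hi; simpa [hds] using hys.1
    · simpa [hd i hi] using hx i
  have hφ_eq : φ s x = ⟪g x s, x s - ys⟫ + h s (x s) - h s ys := by
    rw [hφ]
    refine IsGreatest.csSup_eq ⟨mem_image_of_mem _ hys.1, forall_mem_image.2 fun z hz => ?_⟩
    have := hys.2 z hz; simp only [inner_sub_right]; linarith
  have hf_le := hlin x hx (x + d) hxd lam ⟨hlam₀, hlam⟩
  rw [add_sub_cancel_left] at hf_le
  have hinner : ⟪g x, d⟫ = ⟪g x s, ys - x s⟫ := by
    rw [PiLp.inner_eq_inner_apply_of_forall_ne_s8 hd, hds]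
  have hh_le : ∑ i, h i ((x + lam • d) i) - ∑ i, h i (x i) ≤ lam * (h s ys - h s (x s)) := by
    rw [Fintype.sum_sub_sum_eq_of_forall_ne (s := s) fun i hi => by simp [hd i hi],
      PiLp.add_apply, PiLp.smul_apply, hds, sub_le_iff_le_add']
    exact (hhcv s).map_add_smul_sub_le_s8 (hx s) hys.1 hlam₀.le (hlam.trans hlam'₁)
  have hdescent : μ (x + lam • d) - μ x ≤ lam * ((1 - β) * δ - φ s x) := by
    rw [hinner, inner_sub_right] at hf_le
    rw [hμ, hμ, hφ_eq, inner_sub_right]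
    linarith
  nlinarith [mul_nonneg (mul_nonneg (sub_pos.2 hβ.2).le hlam₀.le) (sub_nonneg.2 hδφ)]

theorem stmt8
    {n : ℕ} {N : Fin n → ℕ}
    (Xi : ∀ i, Set (Blk N i))
    (hXne : ∀ i, (Xi i).Nonempty)
    (hXcv : ∀ i, Convex ℝ (Xi i))
    (hXcp : ∀ i, IsCompact (Xi i))
    (f : Tot N → ℝ) (g : Tot N → Tot N)
    (hf : ∀ x, HasGradientAt f (g x) x)
    (hg : Continuous g)
    (h : ∀ i, Blk N i → ℝ)
    (hhcv : ∀ i, ConvexOn ℝ (Xi i) (h i))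
    (hhlsc : ∀ i, LowerSemicontinuousOn (h i) (Xi i))
    (X : Set (Tot N)) (hX : X = {x | ∀ i, x i ∈ Xi i})
    (μ : Tot N → ℝ) (hμ : ∀ x, μ x = f x + ∑ i, h i (x i))
    (φ : ∀ i, Tot N → ℝ)
    (hφ : ∀ i x, φ i x =
      sSup ((fun y => ⟪g x i, x i - y⟫ + h i (x i) - h i y) '' Xi i))
    (Y : ∀ i, Tot N → Set (Blk N i))
    (hY : ∀ i x, Y i x = {y ∈ Xi i | ∀ z ∈ Xi i,
      ⟪g x i, y⟫ + h i y ≤ ⟪g x i, z⟫ + h i z})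
    (hgu : UniformContinuousOn g X)
    (β δ : ℝ) (hβ : β ∈ Set.Ioo (0 : ℝ) 1) (hδ : 0 < δ) :
    ∃ lam' : ℝ, 0 < lam' ∧
      ∀ x ∈ X, ∀ s : Fin n, δ ≤ φ s x →
        ∀ ys ∈ Y s x, ∀ d : Tot N, d s = ys - x s → (∀ i, i ≠ s → d i = 0) →
          ∀ lam : ℝ, 0 < lam → lam ≤ lam' →
            μ (x + lam • d) - μ x ≤ -(β * lam * φ s x) :=
  stmt8_general Xi hXcv hXcp f g hf h hhcv X hX μ hμ φ hφ Y hY hgu β δ hβ hδ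
end
end

section
/- Finite termination of the basic cycle: suppose the gradient map g is uniformly continuous on X and fix δ > 0, β ∈ (0,1), θ ∈ (0,1). Then there is no infinite sequence {x^k} ⊆ X such that for every k there exist s_k ∈ {1,…,n} with φ_{s_k}(x^k) ≥ δ, a point y^k ∈ Y_{s_k}(x^k) defining d^k by d^k_{s_k} = y^k − x^k_{s_k} and d^k_i = 0 for i ≠ s_k, and a stepsize λ_k = θ^{m_k} with m_k the smallest nonnegative integer satisfying μ(x^k + θ^{m_k} d^k) ≤ μ(x^k) − β θ^{m_k} φ_{s_k}(x^k), and x^{k+1} = x^k + λ_k d^k. -/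
open scoped RealInnerProductSpace
open Filter Topology

noncomputable section

/-!
Along the iterates `μ` drops by at least `β δ θ ^ m k` per step and is bounded below on the
compact set `X`, so `∑ θ ^ m k < ∞` and the accepted stepsizes tend to `0`. On the other hand, the
mean value theorem for `f`, convexity of `h (s k)` along the block segment and uniform continuity of
`g` on `X` give one threshold `τ > 0` below which every trial step satisfies the Armijo test at
every iterate. Once `θ ^ m k < θ τ`, the rejected trial step `θ ^ (m k - 1)` is below `τ`, a
contradiction.
-/

theorem tendsto_atTop_zero_of_le_sub_mul {u a : ℕ → ℝ} {c B : ℝ} (hc : 0 < c)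
    (ha : ∀ k, 0 ≤ a k) (hu : ∀ k, u (k + 1) ≤ u k - c * a k) (hB : ∀ k, B ≤ u k) :
    Tendsto a atTop (𝓝 0) := by
  have htel : ∀ K, c * ∑ k ∈ Finset.range K, a k ≤ u 0 - u K := by
    intro K
    induction K with
    | zero => simp
    | succ K ih => rw [Finset.sum_range_succ]; linarith [hu K]
  refine (summable_of_sum_range_le (c := (u 0 - B) / c) ha fun K => ?_).tendsto_atTop_zero
  rw [le_div_iff₀' hc]
  linarith [htel K, hB K]

theorem ne_zero_and_pow_sub_one_lt_of_pow_lt_mul {θ τ : ℝ} {m : ℕ} (hθ0 : 0 < θ) (hθ1 : θ < 1)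
    (hτ1 : τ ≤ 1) (h : θ ^ m < θ * τ) : m ≠ 0 ∧ θ ^ (m - 1) < τ := by
  have hm : m ≠ 0 := by
    rintro rfl
    rw [pow_zero] at h
    nlinarith
  refine ⟨hm, lt_of_mul_lt_mul_right ?_ hθ0.le⟩
  rwa [pow_sub_one_mul hm, mul_comm τ]

theorem sSup_image_inner_sub_add_sub_eq {F : Type*} [NormedAddCommGroup F]
    [InnerProductSpace ℝ F] (u x : F) (h : F → ℝ) {S : Set F} {y : F} (hy : y ∈ S)
    (hmin : ∀ z ∈ S, ⟪u, y⟫ + h y ≤ ⟪u, z⟫ + h z) :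
    sSup ((fun z => ⟪u, x - z⟫ + h x - h z) '' S) = ⟪u, x - y⟫ + h x - h y := by
  refine IsGreatest.csSup_eq ⟨⟨y, hy, rfl⟩, ?_⟩
  rintro _ ⟨z, hz, rfl⟩
  simp only [inner_sub_right]
  linarith [hmin z hz]

theorem le_add_mul_inner_add_of_hasGradientAt {F : Type*} [NormedAddCommGroup F]
    [InnerProductSpace ℝ F] [CompleteSpace F] {f : F → ℝ} {g : F → F}
    (hf : ∀ p, HasGradientAt f (g p) p) {x d : F} {L ε : ℝ} (hL : 0 ≤ L)
    (hε : ∀ z ∈ segment ℝ x (x + L • d), ‖g z - g x‖ * ‖d‖ ≤ ε) :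
    f (x + L • d) ≤ f x + L * (⟪g x, d⟫ + ε) := by
  obtain ⟨z, hz, hmvt⟩ := domain_mvt (f' := fun p => InnerProductSpace.toDual ℝ F (g p))
    (fun p _ => (hf p).hasFDerivAt.hasFDerivWithinAt) convex_univ
    (Set.mem_univ x) (Set.mem_univ (x + L • d))
  have hinner : ⟪g z, d⟫ ≤ ⟪g x, d⟫ + ε := by
    have := real_inner_le_norm (g z - g x) d
    rw [inner_sub_left] at this
    linarith [hε z hz]
  simp only [InnerProductSpace.toDual_apply_apply, add_sub_cancel_left, inner_smul_right] at hmvt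
  nlinarith

theorem UniformContinuousOn.exists_pos_forall_segment_le {F G : Type*} [NormedAddCommGroup F]
    [NormedSpace ℝ F] [SeminormedAddCommGroup G] {X : Set F} {g : F → G}
    (hg : UniformContinuousOn g X) (hXc : Convex ℝ X) (hXb : Bornology.IsBounded X)
    {ε : ℝ} (hε : 0 < ε) :
    ∃ τ ∈ Set.Ioc (0 : ℝ) 1, ∀ x ∈ X, ∀ d, x + d ∈ X → ∀ L ∈ Set.Ioc 0 τ,
      ∀ z ∈ segment ℝ x (x + L • d), ‖g z - g x‖ * ‖d‖ ≤ ε := by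
  set D := Metric.diam X
  have hD : 0 ≤ D := Metric.diam_nonneg
  obtain ⟨η, hη, hgη⟩ := Metric.uniformContinuousOn_iff.1 hg (ε / (D + 1)) (by positivity)
  refine ⟨min 1 (η / (D + 1)), ⟨by positivity, min_le_left _ _⟩, ?_⟩
  rintro x hx d hxd L ⟨hL0, hLτ⟩ z hz
  have hd : ‖d‖ ≤ D := by
    simpa [dist_eq_norm] using Metric.dist_le_diam_of_mem hXb hxd hx
  have hxLd : x + L • d ∈ X := by
    simpa using hXc.add_smul_mem hx (by simpa using hxd) ⟨hL0.le, hLτ.trans (min_le_left _ _)⟩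
  have hzx : dist z x < η := calc
    dist z x ≤ dist x (x + L • d) := by
      simpa [dist_comm] using segment_subset_closedBall_left x (x + L • d) hz
    _ = L * ‖d‖ := by simp [dist_eq_norm, norm_smul, hL0.le]
    _ < L * (D + 1) := by gcongr; linarith
    _ ≤ η := by
      have := hLτ.trans (min_le_right _ _)
      rwa [le_div_iff₀ (by positivity)] at this
  have hgz : ‖g z - g x‖ < ε / (D + 1) := by
    rw [← dist_eq_norm]
    exact hgη z (hXc.segment_subset hx hxLd hz) x hx hzx
  calc ‖g z - g x‖ * ‖d‖ ≤ ε / (D + 1) * (D + 1) := by gcongr; linarith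
    _ = ε := by field_simp

section Blocks

variable {ι : Type*} {E : ι → Type*} [∀ i, NormedAddCommGroup (E i)] {p : ENNReal}

theorem PiLp.isCompact_setOf_forall_mem {S : ∀ i, Set (E i)} (hS : ∀ i, IsCompact (S i)) :
    IsCompact {x : PiLp p E | ∀ i, x i ∈ S i} := by
  have : {x : PiLp p E | ∀ i, x i ∈ S i} = WithLp.toLp p '' Set.univ.pi S := by
    ext x
    exact ⟨fun hx => ⟨WithLp.ofLp x, fun i _ => hx i, rfl⟩,
      by rintro ⟨x, hx, rfl⟩ i; exact hx i trivial⟩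
  rw [this]
  exact (isCompact_univ_pi hS).image (PiLp.continuous_toLp p _)

theorem exists_forall_le_add_sum_of_isCompact [Fintype ι] {S : ∀ i, Set (E i)}
    (hS : ∀ i, IsCompact (S i)) {f : PiLp p E → ℝ} (hf : Continuous f) {h : ∀ i, E i → ℝ}
    (hh : ∀ i, LowerSemicontinuousOn (h i) (S i)) :
    ∃ B, ∀ x : PiLp p E, (∀ i, x i ∈ S i) → B ≤ f x + ∑ i, h i (x i) := by
  obtain ⟨b, hb⟩ := (PiLp.isCompact_setOf_forall_mem hS).bddBelow_image hf.continuousOn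
  choose c hc using fun i => (hh i).bddBelow_of_isCompact (hS i)
  exact ⟨b + ∑ i, c i, fun x hx =>
    add_le_add (hb ⟨x, hx, rfl⟩) (Finset.sum_le_sum fun i _ => hc i ⟨x i, hx i, rfl⟩)⟩

variable [∀ i, NormedSpace ℝ (E i)]

theorem PiLp.convex_setOf_forall_mem_s9 {S : ∀ i, Set (E i)} (hS : ∀ i, Convex ℝ (S i)) :
    Convex ℝ {x : PiLp p E | ∀ i, x i ∈ S i} :=
  fun _ hx _ hy _ _ ha hb hab i => hS i (hx i) (hy i) ha hb hab

theorem PiLp.add_smul_apply_of_eq_sub {x d : PiLp p E} {s : ι} {y : E s}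
    (hds : d s = y - x s) (c : ℝ) : (x + c • d) s = (1 - c) • x s + c • y := by
  simp only [PiLp.add_apply, PiLp.smul_apply, hds]
  module

theorem PiLp.add_smul_mem_of_forall_ne {S : ∀ i, Set (E i)} {x d : PiLp p E} {s : ι} {y : E s}
    (hS : Convex ℝ (S s)) (hx : ∀ i, x i ∈ S i) (hy : y ∈ S s)
    (hds : d s = y - x s) (hd : ∀ i, i ≠ s → d i = 0) {c : ℝ} (hc0 : 0 ≤ c) (hc1 : c ≤ 1) :
    ∀ i, (x + c • d) i ∈ S i := by
  intro i
  by_cases hi : i = s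
  · subst hi
    rw [PiLp.add_smul_apply_of_eq_sub hds]
    exact hS (hx i) hy (by linarith) hc0 (by ring)
  · simpa [hd i hi] using hx i

theorem sum_apply_add_smul_le [Fintype ι] {S : ∀ i, Set (E i)} {h : ∀ i, E i → ℝ}
    {x d : PiLp p E} {s : ι} {y : E s} (hh : ConvexOn ℝ (S s) (h s)) (hx : x s ∈ S s) (hy : y ∈ S s)
    (hds : d s = y - x s) (hd : ∀ i, i ≠ s → d i = 0) {c : ℝ} (hc0 : 0 ≤ c) (hc1 : c ≤ 1) :
    ∑ i, h i ((x + c • d) i) ≤ ∑ i, h i (x i) + c * (h s y - h s (x s)) := by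
  have hsum : ∑ i, h i ((x + c • d) i) - ∑ i, h i (x i) = h s ((x + c • d) s) - h s (x s) := by
    rw [← Finset.sum_sub_distrib]
    exact Finset.sum_eq_single s (fun i _ hi => by simp [hd i hi]) (by simp)
  have hconv := hh.2 hx hy (sub_nonneg.2 hc1) hc0 (sub_add_cancel 1 c)
  rw [← PiLp.add_smul_apply_of_eq_sub hds, smul_eq_mul, smul_eq_mul] at hconv
  linarith

end Blocks

section InnerBlocks

variable {ι : Type*} [Fintype ι] {E : ι → Type*} [∀ i, NormedAddCommGroup (E i)]
  [∀ i, InnerProductSpace ℝ (E i)]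

theorem PiLp.inner_eq_inner_apply_of_forall_ne_s9 (u : PiLp 2 E) {d : PiLp 2 E} {s : ι}
    (hd : ∀ i, i ≠ s → d i = 0) : ⟪u, d⟫ = ⟪u s, d s⟫ := by
  rw [PiLp.inner_apply]
  exact Finset.sum_eq_single s (fun i _ hi => by rw [hd i hi, inner_zero_right]) (by simp)

theorem add_sum_apply_add_smul_le [∀ i, CompleteSpace (E i)] {S : ∀ i, Set (E i)}
    {f : PiLp 2 E → ℝ} {g : PiLp 2 E → PiLp 2 E} (hf : ∀ p, HasGradientAt f (g p) p)
    {h : ∀ i, E i → ℝ} {x d : PiLp 2 E} {s : ι} {y : E s} (hh : ConvexOn ℝ (S s) (h s))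
    (hx : x s ∈ S s) (hy : y ∈ S s) (hds : d s = y - x s) (hd : ∀ i, i ≠ s → d i = 0)
    {L ε : ℝ} (hL0 : 0 ≤ L) (hL1 : L ≤ 1)
    (hε : ∀ z ∈ segment ℝ x (x + L • d), ‖g z - g x‖ * ‖d‖ ≤ ε) :
    f (x + L • d) + ∑ i, h i ((x + L • d) i) ≤
      f x + ∑ i, h i (x i) - L * (⟪g x s, x s - y⟫ + h s (x s) - h s y - ε) := by
  have hf' := le_add_mul_inner_add_of_hasGradientAt hf hL0 hε
  have hh' := sum_apply_add_smul_le hh hx hy hds hd hL0 hL1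
  rw [PiLp.inner_eq_inner_apply_of_forall_ne_s9 _ hd, hds, ← neg_sub, inner_neg_right] at hf'
  linear_combination hf' + hh'

end InnerBlocks

theorem stmt9_general
    {n : ℕ} {N : Fin n → ℕ}
    (Xi : ∀ i, Set (Blk N i))
    (hXcv : ∀ i, Convex ℝ (Xi i))
    (hXcp : ∀ i, IsCompact (Xi i))
    (f : Tot N → ℝ) (g : Tot N → Tot N)
    (hf : ∀ x, HasGradientAt f (g x) x)
    (h : ∀ i, Blk N i → ℝ)
    (hhcv : ∀ i, ConvexOn ℝ (Xi i) (h i))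
    (hhlsc : ∀ i, LowerSemicontinuousOn (h i) (Xi i))
    (X : Set (Tot N)) (hX : X = {x | ∀ i, x i ∈ Xi i})
    (μ : Tot N → ℝ) (hμ : ∀ x, μ x = f x + ∑ i, h i (x i))
    (φ : ∀ i, Tot N → ℝ)
    (hφ : ∀ i x, φ i x =
      sSup ((fun y => ⟪g x i, x i - y⟫ + h i (x i) - h i y) '' Xi i))
    (Y : ∀ i, Tot N → Set (Blk N i))
    (hY : ∀ i x, Y i x = {y ∈ Xi i | ∀ z ∈ Xi i,
      ⟪g x i, y⟫ + h i y ≤ ⟪g x i, z⟫ + h i z})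
    (hgu : UniformContinuousOn g X)
    (δ β θ : ℝ) (hδ : 0 < δ) (hβ : β ∈ Set.Ioo (0 : ℝ) 1)
    (hθ : θ ∈ Set.Ioo (0 : ℝ) 1) :
    ¬ ∃ (x : ℕ → Tot N) (s : ℕ → Fin n) (y : (k : ℕ) → Blk N (s k))
        (d : ℕ → Tot N) (m : ℕ → ℕ),
      (∀ k, x k ∈ X) ∧
      (∀ k, δ ≤ φ (s k) (x k)) ∧
      (∀ k, y k ∈ Y (s k) (x k)) ∧
      (∀ k, d k (s k) = y k - x k (s k)) ∧
      (∀ k i, i ≠ s k → d k i = 0) ∧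
      (∀ k, (μ (x k + θ ^ m k • d k) ≤ μ (x k) - β * θ ^ m k * φ (s k) (x k)) ∧
        ∀ m' < m k,
          ¬ (μ (x k + θ ^ m' • d k) ≤ μ (x k) - β * θ ^ m' * φ (s k) (x k))) ∧
      (∀ k, x (k + 1) = x k + θ ^ m k • d k) := by
  obtain ⟨hβ0, hβ1⟩ := hβ
  obtain ⟨hθ0, hθ1⟩ := hθ
  rintro ⟨x, s, y, d, m, hxX, hφδ, hyY, hds, hdo, harm, hstep⟩
  subst hX
  have hy : ∀ k, y k ∈ Xi (s k) ∧ ∀ z ∈ Xi (s k),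
      ⟪g (x k) (s k), y k⟫ + h (s k) (y k) ≤ ⟪g (x k) (s k), z⟫ + h (s k) z := fun k => by
    simpa only [hY, Set.mem_sep_iff] using hyY k
  have hφy : ∀ k, φ (s k) (x k) =
      ⟪g (x k) (s k), x k (s k) - y k⟫ + h (s k) (x k (s k)) - h (s k) (y k) := fun k =>
    (hφ _ _).trans (sSup_image_inner_sub_add_sub_eq _ _ _ (hy k).1 (hy k).2)
  obtain ⟨τ, ⟨hτ0, hτ1⟩, hτ⟩ := hgu.exists_pos_forall_segment_le
    (PiLp.convex_setOf_forall_mem_s9 hXcv) (PiLp.isCompact_setOf_forall_mem hXcp).isBounded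
    (ε := (1 - β) * δ) (by nlinarith)
  obtain ⟨B, hB⟩ := exists_forall_le_add_sum_of_isCompact hXcp
    (continuous_iff_continuousAt.2 fun p => (hf p).differentiableAt.continuousAt) hhlsc
  have hlam : Tendsto (fun k => θ ^ m k) atTop (𝓝 0) := by
    refine tendsto_atTop_zero_of_le_sub_mul (u := fun k => μ (x k)) (mul_pos hβ0 hδ)
      (fun k => by positivity) (fun k => ?_) (fun k => hμ _ ▸ hB _ (hxX k))
    rw [hstep k]
    nlinarith [(harm k).1,
      mul_le_mul_of_nonneg_left (hφδ k) (mul_nonneg hβ0.le (pow_pos hθ0 (m k)).le)]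
  obtain ⟨k, hk⟩ := (hlam.eventually_lt_const (mul_pos hθ0 hτ0)).exists
  obtain ⟨hm, hL⟩ := ne_zero_and_pow_sub_one_lt_of_pow_lt_mul hθ0 hθ1 hτ1 hk
  have hL0 : 0 < θ ^ (m k - 1) := pow_pos hθ0 _
  have hxd : ∀ i, (x k + d k) i ∈ Xi i := by
    simpa using PiLp.add_smul_mem_of_forall_ne (hXcv (s k)) (hxX k) (hy k).1 (hds k) (hdo k)
      zero_le_one le_rfl
  have hdesc := add_sum_apply_add_smul_le hf (hhcv (s k)) (hxX k (s k)) (hy k).1 (hds k) (hdo k)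
    hL0.le (hL.le.trans hτ1) (hτ (x k) (hxX k) (d k) hxd _ ⟨hL0, hL.le⟩)
  apply (harm k).2 (m k - 1) (by omega)
  rw [hμ, hμ, hφy]
  nlinarith [mul_nonneg (mul_nonneg hL0.le (sub_nonneg.2 hβ1.le)) (sub_nonneg.2 (hφy k ▸ hφδ k))]

theorem stmt9
    {n : ℕ} {N : Fin n → ℕ}
    (Xi : ∀ i, Set (Blk N i))
    (hXne : ∀ i, (Xi i).Nonempty)
    (hXcv : ∀ i, Convex ℝ (Xi i))
    (hXcp : ∀ i, IsCompact (Xi i))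
    (f : Tot N → ℝ) (g : Tot N → Tot N)
    (hf : ∀ x, HasGradientAt f (g x) x)
    (hg : Continuous g)
    (h : ∀ i, Blk N i → ℝ)
    (hhcv : ∀ i, ConvexOn ℝ (Xi i) (h i))
    (hhlsc : ∀ i, LowerSemicontinuousOn (h i) (Xi i))
    (X : Set (Tot N)) (hX : X = {x | ∀ i, x i ∈ Xi i})
    (μ : Tot N → ℝ) (hμ : ∀ x, μ x = f x + ∑ i, h i (x i))
    (φ : ∀ i, Tot N → ℝ)
    (hφ : ∀ i x, φ i x =
      sSup ((fun y => ⟪g x i, x i - y⟫ + h i (x i) - h i y) '' Xi i))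
    (Y : ∀ i, Tot N → Set (Blk N i))
    (hY : ∀ i x, Y i x = {y ∈ Xi i | ∀ z ∈ Xi i,
      ⟪g x i, y⟫ + h i y ≤ ⟪g x i, z⟫ + h i z})
    (hgu : UniformContinuousOn g X)
    (δ β θ : ℝ) (hδ : 0 < δ) (hβ : β ∈ Set.Ioo (0 : ℝ) 1)
    (hθ : θ ∈ Set.Ioo (0 : ℝ) 1) :
    ¬ ∃ (x : ℕ → Tot N) (s : ℕ → Fin n) (y : (k : ℕ) → Blk N (s k))
        (d : ℕ → Tot N) (m : ℕ → ℕ),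
      (∀ k, x k ∈ X) ∧
      (∀ k, δ ≤ φ (s k) (x k)) ∧
      (∀ k, y k ∈ Y (s k) (x k)) ∧
      (∀ k, d k (s k) = y k - x k (s k)) ∧
      (∀ k i, i ≠ s k → d k i = 0) ∧
      (∀ k, (μ (x k + θ ^ m k • d k) ≤ μ (x k) - β * θ ^ m k * φ (s k) (x k)) ∧
        ∀ m' < m k,
          ¬ (μ (x k + θ ^ m' • d k) ≤ μ (x k) - β * θ ^ m' * φ (s k) (x k))) ∧
      (∀ k, x (k + 1) = x k + θ ^ m k • d k) :=
  stmt9_general Xi hXcv hXcp f g hf h hhcv hhlsc X hX μ hμ φ hφ Y hY hgu δ β θ hδ hβ hθ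
end
end

section
/- Convex-case sufficiency of the modified line-search test: suppose f is convex. Let x ∈ X, s ∈ {1,…,n}, y_s ∈ Y_s(x), define d by d_s = y_s − x_s and d_i = 0 for i ≠ s, and let λ ∈ (0, 1], β ∈ (0,1). If ⟨g_s(x + λ d), d_s⟩ + λ^{-1}( h_s(x_s + λ d_s) − h_s(x_s) ) ≤ −β φ_s(x), then μ(x + λ d) ≤ μ(x) − β λ φ_s(x). -/
/-! Convexity of `f`, with the gradient taken at the new point, bounds `f (x + λd) - f x` by
`λ ⟪g (x + λd), d⟫`, and since `d` lives in block `s` this is `λ ⟪g_s (x + λd), d_s⟫`; `h` also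
changes only in block `s`. So the change of `μ` is `λ` times the left side of the test. -/

open scoped RealInnerProductSpace
open Filter Topology

noncomputable section

theorem ConvexOn.sub_le_fderiv {E : Type*} [NormedAddCommGroup E] [NormedSpace ℝ E]
    {s : Set E} {f : E → ℝ} {f' : E →L[ℝ] ℝ} {x y : E}
    (hf : ConvexOn ℝ s f) (hx : x ∈ s) (hy : y ∈ s) (hf' : HasFDerivAt f f' y) :
    f y - f x ≤ f' (y - x) := by
  set ℓ : ℝ →ᵃ[ℝ] E := AffineMap.lineMap x y
  have hconv : ConvexOn ℝ (Set.Icc 0 1) (f ∘ ℓ) :=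
    (hf.comp_affineMap ℓ).subset (fun t ht => (hf.1.lineMap_mem hx hy ht : ℓ t ∈ s))
      (convex_Icc 0 1)
  have hderiv : HasDerivAt (f ∘ ℓ) (f' (y - x)) 1 :=
    (by simpa [ℓ] using hf' : HasFDerivAt f f' (ℓ 1)).comp_hasDerivAt 1
      AffineMap.hasDerivAt_lineMap
  simpa [slope, ℓ] using
    hconv.slope_le_of_hasDerivAt (by simp) (by simp) zero_lt_one hderiv

theorem PiLp.inner_eq_inner_apply_of_forall_ne_eq_zero {ι : Type*} [Fintype ι]
    {β : ι → Type*} [∀ i, NormedAddCommGroup (β i)] [∀ i, InnerProductSpace ℝ (β i)]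
    (u v : PiLp 2 β) (s : ι) (hv : ∀ i ≠ s, v i = 0) : ⟪u, v⟫ = ⟪u s, v s⟫ := by
  rw [PiLp.inner_apply, Fintype.sum_eq_single s]
  intro i hi
  rw [hv i hi, inner_zero_right]

theorem PiLp.sum_apply_add_sub_sum_of_forall_ne_eq_zero {ι : Type*} [Fintype ι]
    {β : ι → Type*} [∀ i, NormedAddCommGroup (β i)] {p : ENNReal}
    (h : ∀ i, β i → ℝ) (x v : PiLp p β) (s : ι) (hv : ∀ i ≠ s, v i = 0) :
    ∑ i, h i ((x + v) i) - ∑ i, h i (x i) = h s (x s + v s) - h s (x s) := by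
  rw [← Finset.sum_sub_distrib, Fintype.sum_eq_single s]
  · rfl
  intro i hi
  rw [PiLp.add_apply, hv i hi, add_zero, sub_self]

theorem stmt12_general
    {n : ℕ} {N : Fin n → ℕ}
    (f : Tot N → ℝ) (g : Tot N → Tot N)
    (hf : ∀ x, HasGradientAt f (g x) x)
    (h : ∀ i, Blk N i → ℝ)
    (μ : Tot N → ℝ) (hμ : ∀ x, μ x = f x + ∑ i, h i (x i))
    (φ : ∀ i, Tot N → ℝ)
    (hfcv : ConvexOn ℝ Set.univ f)
    (β : ℝ)
    (x : Tot N) (s : Fin n)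
    (d : Tot N) (hd0 : ∀ i, i ≠ s → d i = 0)
    (lam : ℝ) (hlam0 : 0 < lam)
    (htest : ⟪g (x + lam • d) s, d s⟫
        + (h s (x s + lam • d s) - h s (x s)) / lam ≤ -(β * φ s x)) :
    μ (x + lam • d) ≤ μ x - β * lam * φ s x := by
  have hsupp : ∀ i ≠ s, (lam • d) i = 0 := fun i hi => by
    rw [PiLp.smul_apply, hd0 i hi, smul_zero]
  have hf_step : f (x + lam • d) - f x ≤ lam * ⟪g (x + lam • d) s, d s⟫ := by
    have := hfcv.sub_le_fderiv (Set.mem_univ x) (Set.mem_univ _) (hf (x + lam • d)).hasFDerivAt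
    rwa [InnerProductSpace.toDual_apply_apply, add_sub_cancel_left,
      PiLp.inner_eq_inner_apply_of_forall_ne_eq_zero _ _ s hsupp, PiLp.smul_apply,
      real_inner_smul_right] at this
  have hh_step := PiLp.sum_apply_add_sub_sum_of_forall_ne_eq_zero h x (lam • d) s hsupp
  rw [PiLp.smul_apply] at hh_step
  have hscaled := mul_le_mul_of_nonneg_left htest hlam0.le
  rw [mul_add, mul_div_cancel₀ _ hlam0.ne'] at hscaled
  rw [hμ, hμ]
  linarith

theorem stmt12
    {n : ℕ} {N : Fin n → ℕ}
    (Xi : ∀ i, Set (Blk N i))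
    (hXne : ∀ i, (Xi i).Nonempty)
    (hXcv : ∀ i, Convex ℝ (Xi i))
    (hXcp : ∀ i, IsCompact (Xi i))
    (f : Tot N → ℝ) (g : Tot N → Tot N)
    (hf : ∀ x, HasGradientAt f (g x) x)
    (hg : Continuous g)
    (h : ∀ i, Blk N i → ℝ)
    (hhcv : ∀ i, ConvexOn ℝ (Xi i) (h i))
    (hhlsc : ∀ i, LowerSemicontinuousOn (h i) (Xi i))
    (X : Set (Tot N)) (hX : X = {x | ∀ i, x i ∈ Xi i})
    (μ : Tot N → ℝ) (hμ : ∀ x, μ x = f x + ∑ i, h i (x i))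
    (φ : ∀ i, Tot N → ℝ)
    (hφ : ∀ i x, φ i x =
      sSup ((fun y => ⟪g x i, x i - y⟫ + h i (x i) - h i y) '' Xi i))
    (Y : ∀ i, Tot N → Set (Blk N i))
    (hY : ∀ i x, Y i x = {y ∈ Xi i | ∀ z ∈ Xi i,
      ⟪g x i, y⟫ + h i y ≤ ⟪g x i, z⟫ + h i z})
    (hfcv : ConvexOn ℝ Set.univ f)
    (β : ℝ) (hβ : β ∈ Set.Ioo (0 : ℝ) 1)
    (x : Tot N) (hx : x ∈ X) (s : Fin n)
    (ys : Blk N s) (hys : ys ∈ Y s x)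
    (d : Tot N) (hds : d s = ys - x s) (hd0 : ∀ i, i ≠ s → d i = 0)
    (lam : ℝ) (hlam0 : 0 < lam) (hlam1 : lam ≤ 1)
    (htest : ⟪g (x + lam • d) s, d s⟫
        + (h s (x s + lam • d s) - h s (x s)) / lam ≤ -(β * φ s x)) :
    μ (x + lam • d) ≤ μ x - β * lam * φ s x :=
  stmt12_general f g hf h μ hμ φ hfcv β x s d hd0 lam hlam0 htest
end
end

section
/- Finite identification under the sharp solution condition: suppose f is convex, g is Lipschitz continuous with constant L < ∞, the sharp solution condition holds (there exist τ > 0 and x̄ ∈ X with ⟨g(x̄), x − x̄⟩ + h(x) − h(x̄) ≥ τ ‖x − x̄‖ for all x ∈ X), and {z^l} ⊆ X is a sequence converging to x̄. Then there exists an index t such that Y(z^t) = {x̄}, the solution set of the minimization of μ over X. -/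
open scoped RealInnerProductSpace
open Filter Topology

noncomputable section

/-! Once ‖g(z) - g(x̄)‖ < τ, Cauchy–Schwarz shows that the linearized objective ⟪g(z), ·⟫ + h
still has a sharp minimum at x̄ on X, with constant τ - ‖g(z) - g(x̄)‖ > 0. A sharp minimizer is
the unique minimizer, and the linearized objective is separable over the blocks, so its minimizers
on X are exactly the points of Y(z). For μ, the gradient inequality of the convex f turns
sharpness of the linearization at x̄ into sharpness of μ itself. -/

theorem ConvexOn.add_inner_sub_le_of_hasGradientAt {E : Type*} [NormedAddCommGroup E]
    [InnerProductSpace ℝ E] [CompleteSpace E] {s : Set E} {f : E → ℝ} {f' x y : E}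
    (hfc : ConvexOn ℝ s f) (hx : x ∈ s) (hy : y ∈ s) (hf : HasGradientAt f f' x) :
    f x + ⟪f', y - x⟫ ≤ f y := by
  have hline : ConvexOn ℝ (AffineMap.lineMap x y ⁻¹' s) (f ∘ AffineMap.lineMap x y) :=
    hfc.comp_affineMap _
  have hderiv : HasDerivAt (f ∘ AffineMap.lineMap x y) ⟪f', y - x⟫ (0 : ℝ) := by
    have hf0 : HasFDerivAt f (InnerProductSpace.toDual ℝ E f')
        (AffineMap.lineMap x y (0 : ℝ)) := by
      simpa using hf.hasFDerivAt
    simpa using hf0.comp_hasDerivAt (0 : ℝ) AffineMap.hasDerivAt_lineMap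
  have := hline.le_slope_of_hasDerivAt (x := 0) (y := 1) (by simpa using hx) (by simpa using hy)
    zero_lt_one hderiv
  simp only [slope_def_field, Function.comp_apply, AffineMap.lineMap_apply_one,
    AffineMap.lineMap_apply_zero, sub_zero, div_one] at this
  linarith

def IsSharpMinOn {E : Type*} [Norm E] [Sub E] (F : E → ℝ) (s : Set E) (x : E) (τ : ℝ) :
    Prop :=
  ∀ y ∈ s, τ * ‖y - x‖ ≤ F y - F x

namespace IsSharpMinOn

variable {E : Type*} [NormedAddCommGroup E] {F : E → ℝ} {s : Set E} {x : E} {τ : ℝ}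

theorem setOf_isMinOn_eq_singleton (hF : IsSharpMinOn F s x τ) (hτ : 0 < τ) (hx : x ∈ s) :
    {y | y ∈ s ∧ IsMinOn F s y} = {x} := by
  ext y
  simp only [Set.mem_ofPred_eq, isMinOn_iff, Set.mem_singleton_iff]
  refine ⟨fun ⟨hy, hmin⟩ => ?_, fun hy => ?_⟩
  · have : τ * ‖y - x‖ ≤ 0 := (hF y hy).trans (sub_nonpos.2 (hmin x hx))
    exact sub_eq_zero.1 (norm_le_zero_iff.1 (nonpos_of_mul_nonpos_right this hτ))
  · subst hy
    exact ⟨hx, fun w hw =>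
      sub_nonneg.1 ((by positivity : 0 ≤ τ * ‖w - y‖).trans (hF w hw))⟩

variable [InnerProductSpace ℝ E] {H : E → ℝ} {a : E}

theorem inner_add_of_norm_sub_le {b : E} {ε : ℝ}
    (hF : IsSharpMinOn (fun y => ⟪a, y⟫ + H y) s x τ) (hab : ‖b - a‖ ≤ ε) :
    IsSharpMinOn (fun y => ⟪b, y⟫ + H y) s x (τ - ε) := by
  intro y hy
  have hcs : -(ε * ‖y - x‖) ≤ ⟪b - a, y - x⟫ := by
    have := neg_le_of_abs_le (abs_real_inner_le_norm (b - a) (y - x))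
    nlinarith [norm_nonneg (y - x)]
  rw [inner_sub_left, inner_sub_right, inner_sub_right] at hcs
  linarith [hF y hy]

theorem add_of_convexOn_of_hasGradientAt [CompleteSpace E] {f : E → ℝ}
    (hF : IsSharpMinOn (fun y => ⟪a, y⟫ + H y) s x τ) (hfc : ConvexOn ℝ Set.univ f)
    (hf : HasGradientAt f a x) :
    IsSharpMinOn (fun y => f y + H y) s x τ := by
  intro y hy
  have := hfc.add_inner_sub_le_of_hasGradientAt (Set.mem_univ x) (Set.mem_univ y) hf
  rw [inner_sub_right] at this
  linarith [hF y hy]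

end IsSharpMinOn

theorem PiLp.isMinOn_sum_iff {p : ENNReal} {ι : Type*} [Fintype ι] [DecidableEq ι]
    {β : ι → Type*} {S : ∀ i, Set (β i)} {φ : ∀ i, β i → ℝ} {y : PiLp p β}
    (hy : ∀ i, y i ∈ S i) :
    IsMinOn (fun x : PiLp p β => ∑ i, φ i (x i)) {x | ∀ i, x i ∈ S i} y ↔
      ∀ i, IsMinOn (φ i) (S i) (y i) := by
  simp only [isMinOn_iff]
  refine ⟨fun hmin i w hw => ?_, fun hmin w hw => Finset.sum_le_sum fun i _ => hmin i _ (hw i)⟩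
  have hmem : WithLp.toLp p (Function.update y.ofLp i w) ∈
      {x : PiLp p β | ∀ i, x i ∈ S i} := by
    intro j
    rcases eq_or_ne j i with rfl | hj
    · simpa using hw
    · simpa [hj] using hy j
  have := hmin _ hmem
  simp only [Function.apply_update (fun j => φ j)] at this
  rw [Finset.sum_update_of_mem (Finset.mem_univ i), Finset.sdiff_singleton_eq_erase,
    ← Finset.add_sum_erase _ _ (Finset.mem_univ i)] at this
  linarith

theorem stmt16_general
    {n : ℕ} {N : Fin n → ℕ}
    (Xi : ∀ i, Set (Blk N i))
    (f : Tot N → ℝ) (g : Tot N → Tot N)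
    (hf : ∀ x, HasGradientAt f (g x) x)
    (hg : Continuous g)
    (h : ∀ i, Blk N i → ℝ)
    (X : Set (Tot N)) (hX : X = {x | ∀ i, x i ∈ Xi i})
    (μ : Tot N → ℝ) (hμ : ∀ x, μ x = f x + ∑ i, h i (x i))
    (Y : ∀ i, Tot N → Set (Blk N i))
    (hY : ∀ i x, Y i x = {y ∈ Xi i | ∀ z ∈ Xi i,
      ⟪g x i, y⟫ + h i y ≤ ⟪g x i, z⟫ + h i z})
    (hfcv : ConvexOn ℝ Set.univ f)
    (τ : ℝ) (hτ : 0 < τ)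
    (xb : Tot N) (hxb : xb ∈ X)
    (hsharp : ∀ x ∈ X,
      τ * ‖x - xb‖ ≤ ⟪g xb, x - xb⟫ + (∑ i, h i (x i)) - ∑ i, h i (xb i))
    (z : ℕ → Tot N)
    (hzt : Tendsto z atTop (𝓝 xb)) :
    ∃ t : ℕ, {y : Tot N | ∀ i, y i ∈ Y i (z t)} = {xb} ∧
      {x | x ∈ X ∧ ∀ w ∈ X, μ x ≤ μ w} = {xb} := by
  have hlin : IsSharpMinOn (fun y => ⟪g xb, y⟫ + ∑ i, h i (y i)) X xb τ := fun y hy => by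
    linarith [hsharp y hy, inner_sub_right (𝕜 := ℝ) (g xb) y xb]
  obtain ⟨t, ht⟩ : ∃ t, ‖g (z t) - g xb‖ < τ :=
    ((tendsto_iff_norm_sub_tendsto_zero.1 ((hg.tendsto xb).comp hzt)).eventually
      (gt_mem_nhds hτ)).exists
  let φ i (v : Blk N i) : ℝ := ⟪g (z t) i, v⟫ + h i v
  let Φ (y : Tot N) : ℝ := ∑ i, φ i (y i)
  have hΦ : Φ = fun y => ⟪g (z t), y⟫ + ∑ i, h i (y i) := funext fun y => by
    simp only [Φ, φ, Finset.sum_add_distrib, PiLp.inner_apply]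
  refine ⟨t, ?_, ?_⟩
  · calc {y : Tot N | ∀ i, y i ∈ Y i (z t)} = {y | y ∈ X ∧ IsMinOn Φ X y} := by
          ext y
          simp only [hY, hX, Set.mem_ofPred_eq]
          refine ⟨fun hy => ⟨fun i => (hy i).1, ?_⟩,
            fun ⟨hyX, hmin⟩ i => ⟨hyX i, ?_⟩⟩
          · exact (PiLp.isMinOn_sum_iff (φ := φ) fun i => (hy i).1).2 fun i => (hy i).2
          · exact (PiLp.isMinOn_sum_iff (φ := φ) hyX).1 hmin i
      _ = {xb} := by
          have hΦsharp : IsSharpMinOn Φ X xb (τ - ‖g (z t) - g xb‖) :=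
            hΦ ▸ hlin.inner_add_of_norm_sub_le le_rfl
          exact hΦsharp.setOf_isMinOn_eq_singleton (sub_pos.2 ht) hxb
  · have hμsharp : IsSharpMinOn μ X xb τ :=
      funext hμ ▸ hlin.add_of_convexOn_of_hasGradientAt hfcv (hf xb)
    exact hμsharp.setOf_isMinOn_eq_singleton hτ hxb

theorem stmt16
    {n : ℕ} {N : Fin n → ℕ}
    (Xi : ∀ i, Set (Blk N i))
    (hXne : ∀ i, (Xi i).Nonempty)
    (hXcv : ∀ i, Convex ℝ (Xi i))
    (hXcp : ∀ i, IsCompact (Xi i))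
    (f : Tot N → ℝ) (g : Tot N → Tot N)
    (hf : ∀ x, HasGradientAt f (g x) x)
    (hg : Continuous g)
    (h : ∀ i, Blk N i → ℝ)
    (hhcv : ∀ i, ConvexOn ℝ (Xi i) (h i))
    (hhlsc : ∀ i, LowerSemicontinuousOn (h i) (Xi i))
    (X : Set (Tot N)) (hX : X = {x | ∀ i, x i ∈ Xi i})
    (μ : Tot N → ℝ) (hμ : ∀ x, μ x = f x + ∑ i, h i (x i))
    (Y : ∀ i, Tot N → Set (Blk N i))
    (hY : ∀ i x, Y i x = {y ∈ Xi i | ∀ z ∈ Xi i,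
      ⟪g x i, y⟫ + h i y ≤ ⟪g x i, z⟫ + h i z})
    (hfcv : ConvexOn ℝ Set.univ f)
    (L τ : ℝ) (hτ : 0 < τ)
    (hL : ∀ x y : Tot N, ‖g x - g y‖ ≤ L * ‖x - y‖)
    (xb : Tot N) (hxb : xb ∈ X)
    (hsharp : ∀ x ∈ X,
      τ * ‖x - xb‖ ≤ ⟪g xb, x - xb⟫ + (∑ i, h i (x i)) - ∑ i, h i (xb i))
    (z : ℕ → Tot N) (hz : ∀ l, z l ∈ X)
    (hzt : Tendsto z atTop (𝓝 xb)) :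
    ∃ t : ℕ, {y : Tot N | ∀ i, y i ∈ Y i (z t)} = {xb} ∧
      {x | x ∈ X ∧ ∀ w ∈ X, μ x ≤ μ w} = {xb} :=
  stmt16_general Xi f g hf hg h X hX μ hμ Y hY hfcv τ hτ xb hxb hsharp z hzt
end
end
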